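/- With fᵢ^± and bₖ^± defined as above, the vanishing relations [[fᵢ^ξ, fⱼ^η], bₖ^ε] = 0 and [{bₖ^ξ, bₗ^η}, fᵢ^ε] = 0 hold for all parafermion indices i,j, paraboson indices k,l, and all signs ξ,η,ε ∈ {+1,−1}. -/
import Mathlib

set_option maxHeartbeats 1600000

open Matrix

/-- Index set `[-2n, 2n] ⊂ ℤ` for rows and columns. -/
abbrev Idx (n : ℕ) := {i : ℤ // i ∈ Finset.Icc (-(2 * (n : ℤ))) (2 * (n : ℤ))}

/-- Elementary matrix `e_{a,b}` with rows/columns indexed by `[-2n,2n]`. -/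
def E (n : ℕ) (a b : ℤ) : Matrix (Idx n) (Idx n) ℂ :=
  Matrix.of fun i j => if i.1 = a ∧ j.1 = b then 1 else 0

/-- Parafermion operators. -/
noncomputable def fOp (n : ℕ) (ξ j : ℤ) : Matrix (Idx n) (Idx n) ℂ :=
  if ξ = 1 then ((Real.sqrt 2 : ℝ) : ℂ) • (E n (-2 * j) 0 - E n 0 (-2 * j + 1))
  else ((Real.sqrt 2 : ℝ) : ℂ) • (E n 0 (-2 * j) - E n (-2 * j + 1) 0)

/-- Paraboson operators. -/
noncomputable def bOp (n : ℕ) (ξ i : ℤ) : Matrix (Idx n) (Idx n) ℂ :=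
  if ξ = 1 then ((Real.sqrt 2 : ℝ) : ℂ) • (E n 0 (2 * i) + E n (2 * i - 1) 0)
  else ((Real.sqrt 2 : ℝ) : ℂ) • (E n 0 (2 * i - 1) - E n (2 * i) 0)

lemma E_mul (n : ℕ) (a b c d : ℤ) :
    E n a b * E n c d =
      if b = c ∧ -(2 * (n : ℤ)) ≤ b ∧ b ≤ 2 * (n : ℤ) then E n a d else 0 := by
  ext p q
  simp only [Matrix.mul_apply, E, Matrix.of_apply]
  by_cases h : b = c ∧ -(2 * (n : ℤ)) ≤ b ∧ b ≤ 2 * (n : ℤ)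
  · obtain ⟨rfl, hb⟩ := h
    rw [if_pos ⟨rfl, hb⟩]
    rw [Finset.sum_eq_single (⟨b, Finset.mem_Icc.mpr hb⟩ : Idx n)]
    · by_cases hp : p.1 = a <;> by_cases hq : q.1 = d <;> simp [hp, hq]
    · intro m _ hm
      have : m.1 ≠ b := fun h => hm (Subtype.ext h)
      simp [this]
    · simp
  · rw [if_neg h]
    simp only [Matrix.zero_apply]
    apply Finset.sum_eq_zero
    intro m _
    by_cases h1 : m.1 = b
    · by_cases h2 : m.1 = c
      · exfalso
        have := m.2
        rw [Finset.mem_Icc] at this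
        exact h ⟨h1 ▸ h2, h1 ▸ this⟩
      · simp [h2]
    · simp [h1]

lemma sqrt2_sq : ((Real.sqrt 2 : ℝ) : ℂ) * ((Real.sqrt 2 : ℝ) : ℂ) = 2 := by
  rw [← Complex.ofReal_mul, Real.mul_self_sqrt (by norm_num)]; norm_num

lemma fOp_one (n : ℕ) (j : ℤ) :
    fOp n 1 j = ((Real.sqrt 2 : ℝ) : ℂ) • (E n (-2 * j) 0 - E n 0 (-2 * j + 1)) := by
  simp [fOp]

lemma fOp_neg (n : ℕ) (j : ℤ) :
    fOp n (-1) j = ((Real.sqrt 2 : ℝ) : ℂ) • (E n 0 (-2 * j) - E n (-2 * j + 1) 0) := by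
  norm_num [fOp]

lemma bOp_one (n : ℕ) (i : ℤ) :
    bOp n 1 i = ((Real.sqrt 2 : ℝ) : ℂ) • (E n 0 (2 * i) + E n (2 * i - 1) 0) := by
  simp [bOp]

lemma bOp_neg (n : ℕ) (i : ℤ) :
    bOp n (-1) i = ((Real.sqrt 2 : ℝ) : ℂ) • (E n 0 (2 * i - 1) - E n (2 * i) 0) := by
  norm_num [bOp]

lemma ff_comm (n : ℕ) (i j ξ η : ℤ) (hi : 1 ≤ i ∧ i ≤ (n : ℤ)) (hj : 1 ≤ j ∧ j ≤ (n : ℤ))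
    (hξ : ξ = 1 ∨ ξ = -1) (hη : η = 1 ∨ η = -1) :
    ∃ a b c d : ℤ, a < 0 ∧ b < 0 ∧ c < 0 ∧ d < 0 ∧
      fOp n ξ i * fOp n η j - fOp n η j * fOp n ξ i =
        (2 : ℂ) • E n a b - (2 : ℂ) • E n c d := by
  obtain ⟨hi1, hi2⟩ := hi; obtain ⟨hj1, hj2⟩ := hj
  rcases hξ with rfl | rfl <;> rcases hη with rfl | rfl
  · exact ⟨-2*j, -2*i+1, -2*i, -2*j+1, by omega, by omega, by omega, by omega, by
      simp only [fOp_one, fOp_neg, smul_mul_assoc, smul_smul, mul_smul_comm, sqrt2_sq,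
        sub_mul, mul_sub, E_mul, true_and]
      split_ifs <;>
        first
          | (exfalso; omega)
          | (simp only [smul_add, smul_sub, smul_zero, smul_smul, sqrt2_sq, sub_zero,
              zero_sub, smul_neg, neg_neg]; try abel)⟩
  · exact ⟨-2*i, -2*j, -2*j+1, -2*i+1, by omega, by omega, by omega, by omega, by
      simp only [fOp_one, fOp_neg, smul_mul_assoc, smul_smul, mul_smul_comm, sqrt2_sq,
        sub_mul, mul_sub, E_mul, true_and]
      split_ifs <;>
        first
          | (exfalso; omega)
          | (simp only [smul_add, smul_sub, smul_zero, smul_smul, sqrt2_sq, sub_zero,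
              zero_sub, smul_neg, neg_neg]; try abel)⟩
  · exact ⟨-2*i+1, -2*j+1, -2*j, -2*i, by omega, by omega, by omega, by omega, by
      simp only [fOp_one, fOp_neg, smul_mul_assoc, smul_smul, mul_smul_comm, sqrt2_sq,
        sub_mul, mul_sub, E_mul, true_and]
      split_ifs <;>
        first
          | (exfalso; omega)
          | (simp only [smul_add, smul_sub, smul_zero, smul_smul, sqrt2_sq, sub_zero,
              zero_sub, smul_neg, neg_neg]; try abel)⟩
  · exact ⟨-2*j+1, -2*i, -2*i+1, -2*j, by omega, by omega, by omega, by omega, by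
      simp only [fOp_one, fOp_neg, smul_mul_assoc, smul_smul, mul_smul_comm, sqrt2_sq,
        sub_mul, mul_sub, E_mul, true_and]
      split_ifs <;>
        first
          | (exfalso; omega)
          | (simp only [smul_add, smul_sub, smul_zero, smul_smul, sqrt2_sq, sub_zero,
              zero_sub, smul_neg, neg_neg]; try abel)⟩

lemma bb_anti (n : ℕ) (k l ξ η : ℤ) (hk : 1 ≤ k ∧ k ≤ (n : ℤ)) (hl : 1 ≤ l ∧ l ≤ (n : ℤ))
    (hξ : ξ = 1 ∨ ξ = -1) (hη : η = 1 ∨ η = -1) :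
    ∃ (a b c d : ℤ) (u v : ℂ), 0 < a ∧ 0 < b ∧ 0 < c ∧ 0 < d ∧
      bOp n ξ k * bOp n η l + bOp n η l * bOp n ξ k =
        u • E n a b + v • E n c d := by
  obtain ⟨hk1, hk2⟩ := hk; obtain ⟨hl1, hl2⟩ := hl
  rcases hξ with rfl | rfl <;> rcases hη with rfl | rfl
  · exact ⟨2*k-1, 2*l, 2*l-1, 2*k, 2, 2, by omega, by omega, by omega, by omega, by
      simp only [bOp_one, bOp_neg, smul_mul_assoc, smul_smul, mul_smul_comm, sqrt2_sq,
        sub_mul, mul_sub, add_mul, mul_add, E_mul, true_and]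
      split_ifs <;>
        first
          | (exfalso; omega)
          | (simp only [smul_add, smul_sub, smul_zero, smul_smul, sqrt2_sq, sub_zero,
              zero_sub, add_zero, zero_add, smul_neg, neg_neg]; try abel)⟩
  · exact ⟨2*k-1, 2*l-1, 2*l, 2*k, 2, -2, by omega, by omega, by omega, by omega, by
      simp only [bOp_one, bOp_neg, smul_mul_assoc, smul_smul, mul_smul_comm, sqrt2_sq,
        sub_mul, mul_sub, add_mul, mul_add, E_mul, true_and]
      split_ifs <;>
        first
          | (exfalso; omega)
          | (simp only [smul_add, smul_sub, smul_zero, smul_smul, sqrt2_sq, sub_zero,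
              zero_sub, add_zero, zero_add, smul_neg, neg_neg, neg_smul]; try abel)⟩
  · exact ⟨2*l-1, 2*k-1, 2*k, 2*l, 2, -2, by omega, by omega, by omega, by omega, by
      simp only [bOp_one, bOp_neg, smul_mul_assoc, smul_smul, mul_smul_comm, sqrt2_sq,
        sub_mul, mul_sub, add_mul, mul_add, E_mul, true_and]
      split_ifs <;>
        first
          | (exfalso; omega)
          | (simp only [smul_add, smul_sub, smul_zero, smul_smul, sqrt2_sq, sub_zero,
              zero_sub, add_zero, zero_add, smul_neg, neg_neg, neg_smul]; try abel)⟩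
  · exact ⟨2*k, 2*l-1, 2*l, 2*k-1, -2, -2, by omega, by omega, by omega, by omega, by
      simp only [bOp_one, bOp_neg, smul_mul_assoc, smul_smul, mul_smul_comm, sqrt2_sq,
        sub_mul, mul_sub, add_mul, mul_add, E_mul, true_and]
      split_ifs <;>
        first
          | (exfalso; omega)
          | (simp only [smul_add, smul_sub, smul_zero, smul_smul, sqrt2_sq, sub_zero,
              zero_sub, add_zero, zero_add, smul_neg, neg_neg, neg_smul]; try abel)⟩

lemma E_mul_bOp (n : ℕ) (a b k ε : ℤ) (hb : b < 0) (hk : 1 ≤ k) :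
    E n a b * bOp n ε k = 0 := by
  unfold bOp
  split_ifs <;>
    simp only [mul_smul_comm, mul_add, mul_sub, E_mul] <;>
    split_ifs <;> first | (exfalso; omega) | simp

lemma bOp_mul_E (n : ℕ) (a b k ε : ℤ) (ha : a < 0) (hk : 1 ≤ k) :
    bOp n ε k * E n a b = 0 := by
  unfold bOp
  split_ifs <;>
    simp only [smul_mul_assoc, add_mul, sub_mul, E_mul] <;>
    split_ifs <;> first | (exfalso; omega) | simp

lemma E_mul_fOp (n : ℕ) (a b i ε : ℤ) (hb : 0 < b) (hi : 1 ≤ i) :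
    E n a b * fOp n ε i = 0 := by
  unfold fOp
  split_ifs <;>
    simp only [mul_smul_comm, mul_add, mul_sub, E_mul] <;>
    split_ifs <;> first | (exfalso; omega) | simp

lemma fOp_mul_E (n : ℕ) (a b i ε : ℤ) (ha : 0 < a) (hi : 1 ≤ i) :
    fOp n ε i * E n a b = 0 := by
  unfold fOp
  split_ifs <;>
    simp only [smul_mul_assoc, add_mul, sub_mul, E_mul] <;>
    split_ifs <;> first | (exfalso; omega) | simp

/-- the vanishing mixed relations
`[[f_i^ξ, f_j^η], b_k^ε] = 0` and `[{b_k^ξ, b_l^η}, f_i^ε] = 0`. -/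
theorem stmt9 (n : ℕ) (i j k l ξ η ε : ℤ)
    (hi : 1 ≤ i ∧ i ≤ (n : ℤ)) (hj : 1 ≤ j ∧ j ≤ (n : ℤ))
    (hk : 1 ≤ k ∧ k ≤ (n : ℤ)) (hl : 1 ≤ l ∧ l ≤ (n : ℤ))
    (hξ : ξ = 1 ∨ ξ = -1) (hη : η = 1 ∨ η = -1) (hε : ε = 1 ∨ ε = -1) :
    ((fOp n ξ i * fOp n η j - fOp n η j * fOp n ξ i) * bOp n ε k -
      bOp n ε k * (fOp n ξ i * fOp n η j - fOp n η j * fOp n ξ i) = 0) ∧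
    ((bOp n ξ k * bOp n η l + bOp n η l * bOp n ξ k) * fOp n ε i -
      fOp n ε i * (bOp n ξ k * bOp n η l + bOp n η l * bOp n ξ k) = 0) := by
  constructor
  · obtain ⟨a, b, c, d, ha, hb, hc, hd, h⟩ := ff_comm n i j ξ η hi hj hξ hη
    rw [h, sub_mul, mul_sub, smul_mul_assoc, smul_mul_assoc, mul_smul_comm, mul_smul_comm,
      E_mul_bOp n a b k ε hb hk.1, E_mul_bOp n c d k ε hd hk.1,
      bOp_mul_E n a b k ε ha hk.1, bOp_mul_E n c d k ε hc hk.1]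
    simp
  · obtain ⟨a, b, c, d, u, v, ha, hb, hc, hd, h⟩ := bb_anti n k l ξ η hk hl hξ hη
    rw [h, add_mul, mul_add, smul_mul_assoc, smul_mul_assoc, mul_smul_comm, mul_smul_comm,
      E_mul_fOp n a b i ε hb hi.1, E_mul_fOp n c d i ε hd hi.1,
      fOp_mul_E n a b i ε ha hi.1, fOp_mul_E n c d i ε hc hi.1]
    simp
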